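/- Let ε > 0 and let φ : ℝ → ℝ be twice continuously differentiable with φ''(t) + φ(t) + φ(t)³ = 0 for all t, φ(0) = ε, and φ'(0) = 0. Then φ is periodic with period T(ε) = 4·K(κ(ε))/√(1+ε²); that is, φ(t + T(ε)) = φ(t) for all t ∈ ℝ. -/

import Mathlib

/-!
Put `ω = √(1 + ε²)` and `m = κ(ε)²`, and let `am = F(·|m)⁻¹` be the inverse of the incomplete
elliptic integral `F(θ|m) = ∫₀^θ (1 - m sin²ψ)^{-1/2} dψ`, with `sn = sin ∘ am`, `cn = cos ∘ am`
and `dn = √(1 - m sn²)`. Then `am' = dn`, and the curve `x = ε cn(ωt)`, `y = -εω sn(ωt) dn(ωt)`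
solves `x' = y`, `y' = -x - x³`, because `2m(1 + ε²) = ε²` turns `ω²(1 - 2m sn²)` into
`1 + ε² cn²`. The vector field `(x, y) ↦ (y, -x - x³)` is `C¹`, so two global solutions that
agree at one time agree on a clopen subset of `ℝ`, i.e. everywhere; hence `φ = ε cn(ω ·)`.
Finally the integrand of `F` is `π`-periodic and symmetric about `π/2`, so
`F(θ + 2π) = F(θ) + 4K`, and therefore `am(s + 4K) = am(s) + 2π` and `cn` has period `4K`.
-/

open Real Set

noncomputable def kappaMod (ε : ℝ) : ℝ := ε / Real.sqrt (2 * (1 + ε ^ 2))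

noncomputable def ellipticK (κ : ℝ) : ℝ :=
  ∫ θ in (0:ℝ)..(π / 2), 1 / Real.sqrt (1 - κ ^ 2 * Real.sin θ ^ 2)

noncomputable def freqOmega (ε : ℝ) : ℝ :=
  (π / 2) * Real.sqrt (1 + ε ^ 2) / ellipticK (kappaMod ε)

open Filter Topology

noncomputable def ellipticF (m θ : ℝ) : ℝ := ∫ ψ in (0 : ℝ)..θ, 1 / √(1 - m * sin ψ ^ 2)

/-- The Jacobi amplitude; `Function.invFun` makes it the inverse of `ellipticF m` only for
`0 ≤ m < 1`, where `ellipticF m` is bijective. -/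
noncomputable def jacobiAm (m : ℝ) : ℝ → ℝ := Function.invFun (ellipticF m)

noncomputable def jacobiSn (m s : ℝ) : ℝ := sin (jacobiAm m s)

noncomputable def jacobiCn (m s : ℝ) : ℝ := cos (jacobiAm m s)

noncomputable def jacobiDn (m s : ℝ) : ℝ := √(1 - m * jacobiSn m s ^ 2)

section EllipticF

variable {m : ℝ}

theorem ellipticK_eq_ellipticF (κ : ℝ) : ellipticK κ = ellipticF (κ ^ 2) (π / 2) := rfl

theorem ellipticF_zero (m : ℝ) : ellipticF m 0 = 0 := intervalIntegral.integral_same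

theorem one_sub_mul_sin_sq_pos (hm : m < 1) (ψ : ℝ) : 0 < 1 - m * sin ψ ^ 2 := by
  nlinarith [sin_sq_le_one ψ, sq_nonneg (sin ψ),
    mul_nonneg (sq_nonneg (sin ψ)) (sub_nonneg.2 hm.le)]

theorem continuous_ellipticF_integrand (hm : m < 1) :
    Continuous fun ψ ↦ 1 / √(1 - m * sin ψ ^ 2) :=
  continuous_const.div (by fun_prop) fun ψ ↦ (sqrt_pos.2 (one_sub_mul_sin_sq_pos hm ψ)).ne'

theorem one_le_ellipticF_integrand (hm0 : 0 ≤ m) (hm1 : m < 1) (ψ : ℝ) :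
    1 ≤ 1 / √(1 - m * sin ψ ^ 2) := by
  rw [le_div_iff₀ (sqrt_pos.2 (one_sub_mul_sin_sq_pos hm1 ψ)), one_mul, sqrt_le_one]
  nlinarith [sq_nonneg (sin ψ)]

theorem hasDerivAt_ellipticF (hm : m < 1) (θ : ℝ) :
    HasDerivAt (ellipticF m) (1 / √(1 - m * sin θ ^ 2)) θ :=
  (continuous_ellipticF_integrand hm).integral_hasStrictDerivAt 0 θ |>.hasDerivAt

theorem strictMono_ellipticF (hm : m < 1) : StrictMono (ellipticF m) :=
  strictMono_of_hasDerivAt_pos (hasDerivAt_ellipticF hm) fun θ ↦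
    one_div_pos.2 (sqrt_pos.2 (one_sub_mul_sin_sq_pos hm θ))

theorem ellipticF_surjective (hm0 : 0 ≤ m) (hm1 : m < 1) :
    Function.Surjective (ellipticF m) := by
  have hmono : Monotone fun θ ↦ ellipticF m θ - θ :=
    monotone_of_hasDerivAt_nonneg (fun θ ↦ (hasDerivAt_ellipticF hm1 θ).sub (hasDerivAt_id θ))
      fun θ ↦ sub_nonneg.2 (one_le_ellipticF_integrand hm0 hm1 θ)
  have hle : ∀ θ, 0 ≤ θ → θ ≤ ellipticF m θ := fun θ hθ ↦ by
    simpa [ellipticF_zero] using hmono hθ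
  have hge : ∀ θ, θ ≤ 0 → ellipticF m θ ≤ θ := fun θ hθ ↦ by
    simpa [ellipticF_zero] using hmono hθ
  refine Continuous.surjective (continuous_iff_continuousAt.2 fun θ ↦
    (hasDerivAt_ellipticF hm1 θ).continuousAt) ?_ ?_
  · exact tendsto_atTop_mono' _ ((eventually_ge_atTop 0).mono hle) tendsto_id
  · exact tendsto_atBot_mono' _ ((eventually_le_atBot 0).mono hge) tendsto_id

theorem ellipticF_pi (hm : m < 1) : ellipticF m π = 2 * ellipticF m (π / 2) := by
  have hint := (continuous_ellipticF_integrand hm).intervalIntegrable (μ := MeasureTheory.volume)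
  have hreflect : ∫ ψ in π / 2..π, 1 / √(1 - m * sin ψ ^ 2) = ellipticF m (π / 2) := by
    have h := intervalIntegral.integral_comp_sub_left (fun ψ ↦ 1 / √(1 - m * sin ψ ^ 2)) π
      (a := 0) (b := π / 2)
    simp only [sin_pi_sub, sub_zero, sub_half] at h
    exact h.symm
  rw [ellipticF, ← intervalIntegral.integral_add_adjacent_intervals (hint 0 (π / 2)) (hint _ π),
    hreflect, ellipticF, two_mul]

theorem ellipticF_add_pi (hm : m < 1) (θ : ℝ) :
    ellipticF m (θ + π) = ellipticF m θ + 2 * ellipticF m (π / 2) := by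
  have hper : Function.Periodic (fun ψ ↦ 1 / √(1 - m * sin ψ ^ 2)) π := fun ψ ↦ by
    simp only [sin_add_pi, neg_sq]
  rw [← ellipticF_pi hm, ellipticF, hper.intervalIntegral_add_eq_add 0 θ
    fun _ _ ↦ (continuous_ellipticF_integrand hm).intervalIntegrable _ _, zero_add]
  rfl

theorem ellipticF_add_two_pi (hm : m < 1) (θ : ℝ) :
    ellipticF m (θ + 2 * π) = ellipticF m θ + 4 * ellipticF m (π / 2) := by
  rw [two_mul, ← add_assoc, ellipticF_add_pi hm, ellipticF_add_pi hm]
  ring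

end EllipticF

section Jacobi

variable {m : ℝ}

theorem ellipticF_jacobiAm (hm0 : 0 ≤ m) (hm1 : m < 1) (s : ℝ) :
    ellipticF m (jacobiAm m s) = s :=
  Function.rightInverse_invFun (ellipticF_surjective hm0 hm1) s

theorem jacobiAm_ellipticF (hm : m < 1) (θ : ℝ) : jacobiAm m (ellipticF m θ) = θ :=
  Function.leftInverse_invFun (strictMono_ellipticF hm).injective θ

theorem jacobiAm_zero (hm : m < 1) : jacobiAm m 0 = 0 := by
  simpa only [ellipticF_zero] using jacobiAm_ellipticF hm 0

theorem jacobiAm_add_four_mul_ellipticF (hm0 : 0 ≤ m) (hm1 : m < 1) (s : ℝ) :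
    jacobiAm m (s + 4 * ellipticF m (π / 2)) = jacobiAm m s + 2 * π := by
  apply (strictMono_ellipticF hm1).injective
  rw [ellipticF_add_two_pi hm1, ellipticF_jacobiAm hm0 hm1, ellipticF_jacobiAm hm0 hm1]

theorem continuous_jacobiAm (hm0 : 0 ≤ m) (hm1 : m < 1) : Continuous (jacobiAm m) := by
  refine Monotone.continuous_of_surjective (fun a b hab ↦ ?_)
    fun θ ↦ ⟨_, jacobiAm_ellipticF hm1 θ⟩
  rwa [← (strictMono_ellipticF hm1).le_iff_le, ellipticF_jacobiAm hm0 hm1,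
    ellipticF_jacobiAm hm0 hm1]

theorem jacobiDn_pos (hm : m < 1) (s : ℝ) : 0 < jacobiDn m s :=
  sqrt_pos.2 (one_sub_mul_sin_sq_pos hm _)

theorem hasDerivAt_jacobiAm (hm0 : 0 ≤ m) (hm1 : m < 1) (s : ℝ) :
    HasDerivAt (jacobiAm m) (jacobiDn m s) s := by
  have h := (hasDerivAt_ellipticF hm1 (jacobiAm m s)).of_local_left_inverse
    (continuous_jacobiAm hm0 hm1).continuousAt (one_div_pos.2 (jacobiDn_pos hm1 s)).ne'
    (Eventually.of_forall (ellipticF_jacobiAm hm0 hm1))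
  rwa [one_div, inv_inv] at h

theorem hasDerivAt_jacobiSn (hm0 : 0 ≤ m) (hm1 : m < 1) (s : ℝ) :
    HasDerivAt (jacobiSn m) (jacobiCn m s * jacobiDn m s) s :=
  (hasDerivAt_sin _).comp s (hasDerivAt_jacobiAm hm0 hm1 s)

theorem hasDerivAt_jacobiCn (hm0 : 0 ≤ m) (hm1 : m < 1) (s : ℝ) :
    HasDerivAt (jacobiCn m) (-(jacobiSn m s * jacobiDn m s)) s := by
  have h := (hasDerivAt_cos _).comp s (hasDerivAt_jacobiAm hm0 hm1 s)
  rwa [neg_mul] at h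

theorem hasDerivAt_jacobiDn (hm0 : 0 ≤ m) (hm1 : m < 1) (s : ℝ) :
    HasDerivAt (jacobiDn m) (-(m * jacobiSn m s * jacobiCn m s)) s := by
  have h := (((hasDerivAt_jacobiSn hm0 hm1 s).pow 2).const_mul m).const_sub 1 |>.sqrt
    (one_sub_mul_sin_sq_pos hm1 _).ne'
  refine h.congr_deriv ?_
  have hdn : √(1 - m * (jacobiSn m ^ 2) s) = jacobiDn m s := rfl
  have := (jacobiDn_pos hm1 s).ne'
  rw [hdn]
  field_simp
  ring

end Jacobi

theorem ODE_solution_unique_of_contDiff {E : Type*} [NormedAddCommGroup E] [NormedSpace ℝ E]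
    {v : E → E} (hv : ContDiff ℝ 1 v) {f g : ℝ → E} (hf : ∀ t, HasDerivAt f (v (f t)) t)
    (hg : ∀ t, HasDerivAt g (v (g t)) t) {t₀ : ℝ} (h₀ : f t₀ = g t₀) : f = g := by
  have hclosed : IsClosed {t | f t = g t} :=
    isClosed_eq (continuous_iff_continuousAt.2 fun t ↦ (hf t).continuousAt)
      (continuous_iff_continuousAt.2 fun t ↦ (hg t).continuousAt)
  have hopen : IsOpen {t | f t = g t} := by
    refine isOpen_iff_mem_nhds.2 fun t (ht : f t = g t) ↦ ?_
    obtain ⟨K, s, hs, hK⟩ := (hv.contDiffAt (x := f t)).exists_lipschitzOnWith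
    have hfs : ∀ᶠ τ in 𝓝 t, f τ ∈ s := (hf t).continuousAt hs
    have hgs : ∀ᶠ τ in 𝓝 t, g τ ∈ s := (hg t).continuousAt (ht ▸ hs)
    exact ODE_solution_unique_of_eventually (v := fun _ ↦ v) (s := fun _ ↦ s)
      (Eventually.of_forall fun _ ↦ hK) (hfs.mono fun τ h ↦ ⟨hf τ, h⟩)
      (hgs.mono fun τ h ↦ ⟨hg τ, h⟩) ht
  funext t
  exact eq_univ_iff_forall.1 (IsClopen.eq_univ ⟨hclosed, hopen⟩ ⟨t₀, h₀⟩) t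

def duffingField (p : ℝ × ℝ) : ℝ × ℝ := (p.2, -p.1 - p.1 ^ 3)

theorem contDiff_duffingField : ContDiff ℝ 1 duffingField := by
  unfold duffingField
  fun_prop

theorem hasDerivAt_prodMk_deriv_of_duffing {φ : ℝ → ℝ} (hφ : ContDiff ℝ 2 φ)
    (hduff : ∀ t, deriv (deriv φ) t + φ t + φ t ^ 3 = 0) (t : ℝ) :
    HasDerivAt (fun t ↦ (φ t, deriv φ t)) (duffingField (φ t, deriv φ t)) t := by
  have h2 : deriv (deriv φ) t = -φ t - φ t ^ 3 := by linarith [hduff t]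
  refine ((hφ.differentiable (by norm_num) t).hasDerivAt).prodMk ?_
  simpa only [duffingField, h2] using (hφ.differentiable_deriv_two t).hasDerivAt

theorem kappaMod_sq_mul (ε : ℝ) : kappaMod ε ^ 2 * (2 * (1 + ε ^ 2)) = ε ^ 2 := by
  rw [kappaMod, div_pow, sq_sqrt (by positivity), div_mul_cancel₀ _ (by positivity)]

theorem kappaMod_sq_lt_one (ε : ℝ) : kappaMod ε ^ 2 < 1 := by
  nlinarith [kappaMod_sq_mul ε, sq_nonneg ε]

noncomputable def duffingCn (ε t : ℝ) : ℝ × ℝ :=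
  (ε * jacobiCn (kappaMod ε ^ 2) (√(1 + ε ^ 2) * t),
    -(ε * √(1 + ε ^ 2)) * (jacobiSn (kappaMod ε ^ 2) (√(1 + ε ^ 2) * t) *
      jacobiDn (kappaMod ε ^ 2) (√(1 + ε ^ 2) * t)))

theorem duffingCn_zero (ε : ℝ) : duffingCn ε 0 = (ε, 0) := by
  simp [duffingCn, jacobiCn, jacobiSn, jacobiAm_zero (kappaMod_sq_lt_one ε)]

theorem hasDerivAt_duffingCn (ε t : ℝ) :
    HasDerivAt (duffingCn ε) (duffingField (duffingCn ε t)) t := by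
  set m := kappaMod ε ^ 2
  set ω := √(1 + ε ^ 2)
  have hm0 : 0 ≤ m := sq_nonneg _
  have hm1 : m < 1 := kappaMod_sq_lt_one ε
  have hlin : HasDerivAt (fun t ↦ ω * t) ω t := by simpa using (hasDerivAt_id t).const_mul ω
  have hcn := ((hasDerivAt_jacobiCn hm0 hm1 _).comp t hlin).const_mul ε
  have hsndn := (((hasDerivAt_jacobiSn hm0 hm1 _).comp t hlin).mul
    ((hasDerivAt_jacobiDn hm0 hm1 _).comp t hlin)).const_mul (-(ε * ω))
  refine (hcn.prodMk hsndn).congr_deriv ?_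
  simp only [duffingCn, duffingField, Function.comp_apply, Prod.mk.injEq]
  set S := jacobiSn m (ω * t)
  set C := jacobiCn m (ω * t)
  set D := jacobiDn m (ω * t)
  have hD : D ^ 2 = 1 - m * S ^ 2 := sq_sqrt (one_sub_mul_sin_sq_pos hm1 _).le
  have hω : ω ^ 2 = 1 + ε ^ 2 := sq_sqrt (by positivity)
  have hm : m * (2 * (1 + ε ^ 2)) = ε ^ 2 := kappaMod_sq_mul ε
  have hSC : S ^ 2 + C ^ 2 = 1 := sin_sq_add_cos_sq _
  constructor
  · ring
  · linear_combination (-ε * ω ^ 2 * C) * hD + (-ε * C * (1 - 2 * m * S ^ 2)) * hω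
      + (ε * C * S ^ 2) * hm + (ε ^ 3 * C) * hSC

theorem duffingCn_periodic (ε : ℝ) :
    Function.Periodic (duffingCn ε) (4 * ellipticK (kappaMod ε) / √(1 + ε ^ 2)) := fun t ↦ by
  have hshift : √(1 + ε ^ 2) * (t + 4 * ellipticK (kappaMod ε) / √(1 + ε ^ 2))
      = √(1 + ε ^ 2) * t + 4 * ellipticF (kappaMod ε ^ 2) (π / 2) := by
    rw [mul_add, mul_div_cancel₀ _ (sqrt_pos.2 (by positivity)).ne', ellipticK_eq_ellipticF]
  have ham := jacobiAm_add_four_mul_ellipticF (sq_nonneg (kappaMod ε)) (kappaMod_sq_lt_one ε)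
  simp only [duffingCn, jacobiCn, jacobiSn, jacobiDn, hshift, ham, sin_add_two_pi,
    cos_add_two_pi]

theorem duffing_period_general (ε : ℝ) (φ : ℝ → ℝ) (hφ : ContDiff ℝ 2 φ)
    (hduff : ∀ t : ℝ, deriv (deriv φ) t + φ t + (φ t) ^ 3 = 0)
    (h0 : φ 0 = ε) (h0' : deriv φ 0 = 0) :
    ∀ t : ℝ, φ (t + 4 * ellipticK (kappaMod ε) / Real.sqrt (1 + ε ^ 2)) = φ t := by
  have hφ_eq : (fun t ↦ (φ t, deriv φ t)) = duffingCn ε :=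
    ODE_solution_unique_of_contDiff contDiff_duffingField
      (hasDerivAt_prodMk_deriv_of_duffing hφ hduff) (hasDerivAt_duffingCn ε)
      (t₀ := 0) (by rw [h0, h0', duffingCn_zero])
  have hper : Function.Periodic (fun t ↦ (φ t, deriv φ t))
      (4 * ellipticK (kappaMod ε) / √(1 + ε ^ 2)) :=
    hφ_eq ▸ duffingCn_periodic ε
  exact fun t ↦ congrArg Prod.fst (hper t)

/-- the Duffing solution with data (ε,0) is periodic with period
4K(κ(ε))/√(1+ε²). -/
theorem duffing_period (ε : ℝ) (hε : 0 < ε) (φ : ℝ → ℝ) (hφ : ContDiff ℝ 2 φ)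
    (hduff : ∀ t : ℝ, deriv (deriv φ) t + φ t + (φ t) ^ 3 = 0)
    (h0 : φ 0 = ε) (h0' : deriv φ 0 = 0) :
    ∀ t : ℝ, φ (t + 4 * ellipticK (kappaMod ε) / Real.sqrt (1 + ε ^ 2)) = φ t :=
  duffing_period_general ε φ hφ hduff h0 h0'
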